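/- Let (X, μ) be a measure space, δ a positive integer, and let u, W, χ : X → ℝ be measurable functions with |u|^{2δ} ∈ L²(μ), |W|^{2δ} ∈ L²(μ), and W − u, χ ∈ L⁴(μ). Then (W^{2δ+1} − u^{2δ+1})·χ is integrable and | ∫ (W^{2δ+1} − u^{2δ+1})·χ dμ | ≤ 2^{2δ−1}(2δ+1)·( ‖|W|^{2δ}‖_{L²(μ)} + ‖|u|^{2δ}‖_{L²(μ)} )·‖W − u‖_{L⁴(μ)}·‖χ‖_{L⁴(μ)}. -/

import Mathlib

open MeasureTheory

/-- The L^p(μ) norm ‖f‖_{L^p(μ)} = (∫ |f|^p dμ)^{1/p}. -/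
noncomputable def lpNormR {X : Type*} [MeasurableSpace X] (μ : Measure X) (p : ℕ)
    (f : X → ℝ) : ℝ :=
  (∫ x, |f x| ^ p ∂μ) ^ ((1 : ℝ) / p)

/-! The bound |a^(n+1) - b^(n+1)| ≤ (n+1)(|a|^n + |b|^n)|a - b| (mean value theorem for
t ↦ t^(n+1)) dominates the integrand pointwise by (2δ+1)(|W|^(2δ) + |u|^(2δ))|W - u||χ|, and
Hölder's inequality with exponents 2, 4, 4 bounds the integral of each of the two terms.
The factor 2^(2δ-1) ≥ 1 is slack. -/

instance ENNReal.HolderTriple.instFourFourTwo : ENNReal.HolderTriple 4 4 2 where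
  inv_add_inv_eq_inv := by
    rw [← two_mul, show (4 : ENNReal) = 2 * 2 by norm_num, ENNReal.mul_inv (by simp) (by simp),
      ← mul_assoc, ENNReal.mul_inv_cancel (by simp) (by simp), one_mul]

lemma pow_max_le_pow_add_pow {α : Type*} [CommRing α] [LinearOrder α] [IsOrderedRing α]
    {a b : α} (ha : 0 ≤ a) (hb : 0 ≤ b) (n : ℕ) : max a b ^ n ≤ a ^ n + b ^ n := by
  rcases le_total a b with h | h
  · simpa [h] using pow_nonneg ha n
  · simpa [h] using pow_nonneg hb n

lemma abs_pow_succ_sub_pow_succ_le {α : Type*} [CommRing α] [LinearOrder α] [IsOrderedRing α]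
    (a b : α) (n : ℕ) :
    |a ^ (n + 1) - b ^ (n + 1)| ≤ (n + 1) * (|a| ^ n + |b| ^ n) * |a - b| := by
  calc |a ^ (n + 1) - b ^ (n + 1)| ≤ |a - b| * (n + 1 : ℕ) * max |a| |b| ^ n :=
        abs_pow_sub_pow_le a b (n + 1)
    _ ≤ |a - b| * (n + 1 : ℕ) * (|a| ^ n + |b| ^ n) := by
        gcongr; exact pow_max_le_pow_add_pow (abs_nonneg a) (abs_nonneg b) n
    _ = (n + 1) * (|a| ^ n + |b| ^ n) * |a - b| := by push_cast; ring

namespace MeasureTheory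

variable {X : Type*} [MeasurableSpace X] {μ : Measure X}

lemma lpNormR_nonneg (p : ℕ) (f : X → ℝ) : 0 ≤ lpNormR μ p f :=
  Real.rpow_nonneg (integral_nonneg fun _ => by positivity) _

lemma memLp_of_integrable_abs_pow {p : ℕ} (hp : p ≠ 0) {f : X → ℝ}
    (hf : AEStronglyMeasurable f μ) (h : Integrable (fun x => |f x| ^ p) μ) : MemLp f p μ :=
  (integrable_norm_rpow_iff hf (by simpa) (by simp)).1 (by simpa [Real.rpow_natCast] using h)

lemma MemLp.lpNormR_eq_toReal_eLpNorm {p : ℕ} (hp : p ≠ 0) {f : X → ℝ} (hf : MemLp f p μ) :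
    lpNormR μ p f = (eLpNorm f p μ).toReal := by
  rw [hf.eLpNorm_eq_integral_rpow_norm (by simpa) (by simp), ENNReal.toReal_ofReal
    (Real.rpow_nonneg (integral_nonneg fun _ => by positivity) _)]
  simp [lpNormR, Real.rpow_natCast, one_div]

variable {f g h : X → ℝ}

lemma MemLp.integrable_mul_mul (hf : MemLp f 2 μ) (hg : MemLp g 4 μ) (hh : MemLp h 4 μ) :
    Integrable (fun x => f x * (g x * h x)) μ :=
  have hgh : MemLp (fun x => g x * h x) 2 μ := hh.mul' hg
  memLp_one_iff_integrable.1 (hgh.mul' hf)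

lemma integral_abs_mul_mul_le (hf : MemLp f 2 μ) (hg : MemLp g 4 μ) (hh : MemLp h 4 μ) :
    ∫ x, |f x * (g x * h x)| ∂μ ≤ lpNormR μ 2 f * lpNormR μ 4 g * lpNormR μ 4 h := by
  have holder : eLpNorm (fun x => f x * (g x * h x)) 1 μ ≤
      eLpNorm f 2 μ * eLpNorm g 4 μ * eLpNorm h 4 μ :=
    calc eLpNorm (f • (g • h)) 1 μ ≤ eLpNorm f 2 μ * eLpNorm (g • h) 2 μ :=
          eLpNorm_smul_le_mul_eLpNorm (hg.1.mul hh.1) hf.1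
      _ ≤ eLpNorm f 2 μ * (eLpNorm g 4 μ * eLpNorm h 4 μ) := by
          gcongr; exact eLpNorm_smul_le_mul_eLpNorm hh.1 hg.1
      _ = _ := (mul_assoc _ _ _).symm
  rw [hf.lpNormR_eq_toReal_eLpNorm two_ne_zero, hg.lpNormR_eq_toReal_eLpNorm four_ne_zero,
    hh.lpNormR_eq_toReal_eLpNorm four_ne_zero, ← ENNReal.toReal_mul, ← ENNReal.toReal_mul]
  simp only [← Real.norm_eq_abs, Nat.cast_ofNat]
  rw [integral_norm_eq_lintegral_enorm (f := fun x => f x * (g x * h x))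
    (hf.1.mul (hg.1.mul hh.1)), ← eLpNorm_one_eq_lintegral_enorm]
  exact ENNReal.toReal_mono (by finiteness [hf.2, hg.2, hh.2]) holder

lemma integrable_and_abs_integral_pow_succ_sub_pow_succ_mul_le {n : ℕ} {u W χ : X → ℝ}
    (hu : AEStronglyMeasurable u μ) (hW : AEStronglyMeasurable W μ)
    (hWn : MemLp (fun x => |W x| ^ n) 2 μ) (hun : MemLp (fun x => |u x| ^ n) 2 μ)
    (hd : MemLp (fun x => W x - u x) 4 μ) (hχ : MemLp χ 4 μ) :
    Integrable (fun x => (W x ^ (n + 1) - u x ^ (n + 1)) * χ x) μ ∧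
      |∫ x, (W x ^ (n + 1) - u x ^ (n + 1)) * χ x ∂μ| ≤
        (n + 1) * ((lpNormR μ 2 (fun x => |W x| ^ n) + lpNormR μ 2 (fun x => |u x| ^ n)) *
          (lpNormR μ 4 (fun x => W x - u x) * lpNormR μ 4 χ)) := by
  set G := fun x => (n + 1 : ℝ) * (|(|W x| ^ n) * ((W x - u x) * χ x)| +
    |(|u x| ^ n) * ((W x - u x) * χ x)|)
  have hWint := (hWn.integrable_mul_mul hd hχ).abs
  have huint := (hun.integrable_mul_mul hd hχ).abs
  have hG : Integrable G μ := (hWint.add huint).const_mul _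
  have bound : ∀ x, |(W x ^ (n + 1) - u x ^ (n + 1)) * χ x| ≤ G x := fun x => by
    have := abs_pow_succ_sub_pow_succ_le (W x) (u x) n
    simp only [G, abs_mul, abs_abs, abs_pow] at this ⊢
    nlinarith [abs_nonneg (χ x)]
  have hF : Integrable (fun x => (W x ^ (n + 1) - u x ^ (n + 1)) * χ x) μ :=
    hG.mono' (((hW.pow _).sub (hu.pow _)).mul hχ.1) (ae_of_all _ bound)
  refine ⟨hF, ?_⟩
  calc |∫ x, (W x ^ (n + 1) - u x ^ (n + 1)) * χ x ∂μ|
      ≤ ∫ x, G x ∂μ := abs_integral_le_integral_abs.trans (integral_mono hF.abs hG bound)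
    _ = (n + 1) * (∫ x, |(|W x| ^ n) * ((W x - u x) * χ x)| ∂μ +
          ∫ x, |(|u x| ^ n) * ((W x - u x) * χ x)| ∂μ) := by
        rw [integral_const_mul, integral_add hWint huint]
    _ ≤ _ := by
        rw [add_mul (lpNormR μ 2 _)]
        gcongr
        exacts [(integral_abs_mul_mul_le hWn hd hχ).trans_eq (mul_assoc _ _ _),
          (integral_abs_mul_mul_le hun hd hχ).trans_eq (mul_assoc _ _ _)]

end MeasureTheory

theorem stmt_18_general {X : Type*} [MeasurableSpace X] (μ : Measure X)
    (δ : ℕ) (u W χ : X → ℝ)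
    (hu : Measurable u) (hW : Measurable W) (hχ : Measurable χ)
    (hu2 : Integrable (fun x => (|u x| ^ (2 * δ)) ^ 2) μ)
    (hW2 : Integrable (fun x => (|W x| ^ (2 * δ)) ^ 2) μ)
    (hWu4 : Integrable (fun x => |W x - u x| ^ 4) μ)
    (hχ4 : Integrable (fun x => |χ x| ^ 4) μ) :
    Integrable (fun x => (W x ^ (2 * δ + 1) - u x ^ (2 * δ + 1)) * χ x) μ ∧
      |∫ x, (W x ^ (2 * δ + 1) - u x ^ (2 * δ + 1)) * χ x ∂μ| ≤
        2 ^ (2 * δ - 1) * (2 * (δ : ℝ) + 1) *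
          (lpNormR μ 2 (fun x => |W x| ^ (2 * δ)) + lpNormR μ 2 (fun x => |u x| ^ (2 * δ))) *
          lpNormR μ 4 (fun x => W x - u x) * lpNormR μ 4 χ := by
  have hWm : MemLp (fun x => |W x| ^ (2 * δ)) 2 μ :=
    (memLp_two_iff_integrable_sq (by fun_prop)).2 hW2
  have hum : MemLp (fun x => |u x| ^ (2 * δ)) 2 μ :=
    (memLp_two_iff_integrable_sq (by fun_prop)).2 hu2
  have hd : MemLp (fun x => W x - u x) 4 μ :=
    memLp_of_integrable_abs_pow four_ne_zero (by fun_prop) hWu4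
  have hc : MemLp χ 4 μ := memLp_of_integrable_abs_pow four_ne_zero (by fun_prop) hχ4
  obtain ⟨hF, hbound⟩ := integrable_and_abs_integral_pow_succ_sub_pow_succ_mul_le
    hu.aestronglyMeasurable hW.aestronglyMeasurable hWm hum hd hc
  have hcoef : ((2 * δ : ℕ) + 1 : ℝ) ≤ 2 ^ (2 * δ - 1) * (2 * (δ : ℝ) + 1) := by
    push_cast
    exact le_mul_of_one_le_left (by positivity) (one_le_pow₀ one_le_two)
  have hnorms : 0 ≤ (lpNormR μ 2 (fun x => |W x| ^ (2 * δ)) +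
      lpNormR μ 2 (fun x => |u x| ^ (2 * δ))) *
      (lpNormR μ 4 (fun x => W x - u x) * lpNormR μ 4 χ) :=
    mul_nonneg (add_nonneg (lpNormR_nonneg _ _) (lpNormR_nonneg _ _))
      (mul_nonneg (lpNormR_nonneg _ _) (lpNormR_nonneg _ _))
  exact ⟨hF, hbound.trans ((mul_le_mul_of_nonneg_right hcoef hnorms).trans_eq (by ring))⟩

/-- Paper's estimate (7p11) for the term J₃ of the conforming FEM error analysis:
if |u|^{2δ}, |W|^{2δ} ∈ L²(μ) and W − u, χ ∈ L⁴(μ), then (W^{2δ+1} − u^{2δ+1})·χ is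
integrable and
| ∫ (W^{2δ+1} − u^{2δ+1})·χ dμ | ≤
  2^{2δ−1}(2δ+1)·( ‖|W|^{2δ}‖_{L²} + ‖|u|^{2δ}‖_{L²} )·‖W − u‖_{L⁴}·‖χ‖_{L⁴}. -/
theorem stmt_18 {X : Type*} [MeasurableSpace X] (μ : Measure X)
    (δ : ℕ) (hδ : 0 < δ) (u W χ : X → ℝ)
    (hu : Measurable u) (hW : Measurable W) (hχ : Measurable χ)
    (hu2 : Integrable (fun x => (|u x| ^ (2 * δ)) ^ 2) μ)
    (hW2 : Integrable (fun x => (|W x| ^ (2 * δ)) ^ 2) μ)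
    (hWu4 : Integrable (fun x => |W x - u x| ^ 4) μ)
    (hχ4 : Integrable (fun x => |χ x| ^ 4) μ) :
    Integrable (fun x => (W x ^ (2 * δ + 1) - u x ^ (2 * δ + 1)) * χ x) μ ∧
      |∫ x, (W x ^ (2 * δ + 1) - u x ^ (2 * δ + 1)) * χ x ∂μ| ≤
        2 ^ (2 * δ - 1) * (2 * (δ : ℝ) + 1) *
          (lpNormR μ 2 (fun x => |W x| ^ (2 * δ)) + lpNormR μ 2 (fun x => |u x| ^ (2 * δ))) *
          lpNormR μ 4 (fun x => W x - u x) * lpNormR μ 4 χ :=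
  stmt_18_general μ δ u W χ hu hW hχ hu2 hW2 hWu4 hχ4
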